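/- arXiv:1902.02421 — 5 statements merged into one kernel-verified Lean document; each statement's English description precedes it below -/
import Mathlib

section
/- Let (Z, λ, T) be an ergodic invertible measure-preserving system on a subset Z of [0,1] with normalized Lebesgue measure λ. Suppose there exist a constant c > 0, a sequence of integers (n_i), and sequences of measurable sets (A_i), (B_i) such that: (1) λ(A_i) > c and λ(B_i) > c for all i; (2) ∫_{A_i} |T^{n_i}x − x| dλ(x) → 0 as i → ∞; and (3) ∫_{B_i} |T^{n_i}x − Tx| dλ(x) → 0 as i → ∞. Then T is weakly mixing, i.e., T has no nonconstant measurable eigenfunctions. -/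
/-!
If `f ∘ T = γ • f` with `f ≠ 0`, then `‖γ‖ = 1` and, by ergodicity, `‖f‖` is a.e. a constant
`r > 0`. Approximating `f` in `L¹` by a compactly supported continuous function shows that
`∫_S ‖f ∘ u - f ∘ w‖` is small whenever the measure-preserving maps `u`, `w` are `L¹`-close on `S`;
hence `∫_{A i} ‖f ∘ T^[n i] - f‖ → 0` and `∫_{B i} ‖f ∘ T^[n i] - f ∘ T‖ → 0`. These integrals are
`r λ(A i) ‖γ ^ n i - 1‖` and `r λ(B i) ‖γ ^ n i - γ‖` with `λ(A i), λ(B i) > c`, so `γ ^ n i`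
converges both to `1` and to `γ`. Thus `γ = 1`, `f` is `T`-invariant, and ergodicity makes it
constant.
-/

open MeasureTheory Filter Topology

theorem UniformContinuous.exists_dist_le_add_mul_dist {X Y : Type*} [PseudoMetricSpace X]
    [PseudoMetricSpace Y] {g : X → Y} (hg : UniformContinuous g)
    (hbdd : Bornology.IsBounded (Set.range g)) {ε : ℝ} (hε : 0 < ε) :
    ∃ C, ∀ a b, dist (g a) (g b) ≤ ε + C * dist a b := by
  obtain ⟨δ, hδ, hδε⟩ := Metric.uniformContinuous_iff.1 hg ε hε
  obtain ⟨D, hD⟩ := Metric.isBounded_iff.1 hbdd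
  have hD' : ∀ a b, dist (g a) (g b) ≤ max D 0 :=
    fun a b => (hD (Set.mem_range_self a) (Set.mem_range_self b)).trans (le_max_left _ _)
  refine ⟨max D 0 / δ, fun a b => ?_⟩
  rcases lt_or_ge (dist a b) δ with h | h
  · have : 0 ≤ max D 0 / δ * dist a b := by positivity
    linarith [hδε h]
  · have : max D 0 ≤ max D 0 / δ * dist a b := by
      rw [div_mul_eq_mul_div, le_div_iff₀ hδ]
      exact mul_le_mul_of_nonneg_left h (le_max_right _ _)
    linarith [hD' a b]

namespace MeasureTheory

variable {α E : Type*} [MeasurableSpace α] {μ : Measure α} [NormedAddCommGroup E]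

section Transport

variable {X : Type*} [MeasurableSpace X] {ν : Measure X}

theorem MeasurePreserving.integral_comp_of_aestronglyMeasurable [NormedSpace ℝ E]
    {u : α → X} (hu : MeasurePreserving u μ ν) {g : X → E} (hg : AEStronglyMeasurable g ν) :
    ∫ x, g (u x) ∂μ = ∫ y, g y ∂ν := by
  rw [← integral_map hu.aemeasurable (hu.map_eq ▸ hg), hu.map_eq]

theorem MeasurePreserving.setIntegral_norm_comp_sub_le {u : α → X}
    (hu : MeasurePreserving u μ ν) {f g : X → E} (hfg : Integrable (f - g) ν) (S : Set α) :
    ∫ x in S, ‖f (u x) - g (u x)‖ ∂μ ≤ ∫ y, ‖f y - g y‖ ∂ν := by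
  have hcomp : Integrable (fun x => ‖f (u x) - g (u x)‖) μ :=
    (hu.integrable_comp_of_integrable hfg).norm
  calc ∫ x in S, ‖f (u x) - g (u x)‖ ∂μ ≤ ∫ x, ‖f (u x) - g (u x)‖ ∂μ :=
        setIntegral_le_integral hcomp (.of_forall fun _ => norm_nonneg _)
    _ = ∫ y, ‖f y - g y‖ ∂ν :=
        hu.integral_comp_of_aestronglyMeasurable hfg.norm.aestronglyMeasurable

theorem setIntegral_norm_comp_sub_comp_le {u w : α → X} (hu : MeasurePreserving u μ ν)
    (hw : MeasurePreserving w μ ν) {f g : X → E} (hf : Integrable f ν) (hg : Integrable g ν)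
    (S : Set α) :
    ∫ x in S, ‖f (u x) - f (w x)‖ ∂μ ≤
      ∫ x in S, ‖g (u x) - g (w x)‖ ∂μ + 2 * ∫ y, ‖f y - g y‖ ∂ν := by
  have hfg : ∀ v : α → X, MeasurePreserving v μ ν →
      Integrable (fun x => ‖f (v x) - g (v x)‖) (μ.restrict S) :=
    fun v hv => (hv.integrable_comp_of_integrable (hf.sub hg)).norm.restrict
  have hgg : Integrable (fun x => ‖g (u x) - g (w x)‖) (μ.restrict S) :=
    ((hu.integrable_comp_of_integrable hg).sub (hw.integrable_comp_of_integrable hg)).norm.restrict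
  calc ∫ x in S, ‖f (u x) - f (w x)‖ ∂μ
      ≤ ∫ x in S, (‖f (u x) - g (u x)‖ + ‖g (u x) - g (w x)‖ + ‖f (w x) - g (w x)‖) ∂μ := by
        refine integral_mono_of_nonneg (.of_forall fun _ => norm_nonneg _)
          (((hfg u hu).add hgg).add (hfg w hw)) (.of_forall fun x => ?_)
        simpa only [dist_eq_norm, norm_sub_rev (g (w x))] using
          dist_triangle4 (f (u x)) (g (u x)) (g (w x)) (f (w x))
    _ = ∫ x in S, ‖f (u x) - g (u x)‖ ∂μ + ∫ x in S, ‖g (u x) - g (w x)‖ ∂μ +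
          ∫ x in S, ‖f (w x) - g (w x)‖ ∂μ := by
        rw [integral_add _ (hfg w hw), integral_add (hfg u hu) hgg]
        exact (hfg u hu).add hgg
    _ ≤ _ := by
        linarith [hu.setIntegral_norm_comp_sub_le (hf.sub hg) S,
          hw.setIntegral_norm_comp_sub_le (hf.sub hg) S]

end Transport

theorem setIntegral_norm_comp_sub_comp_le_of_dist_le [IsFiniteMeasure μ] {X : Type*}
    [PseudoMetricSpace X] {u w : α → X} {g : X → E} {ε C : ℝ}
    (hg : ∀ a b, dist (g a) (g b) ≤ ε + C * dist a b)
    {S : Set α} (hint : Integrable (fun x => dist (u x) (w x)) (μ.restrict S)) :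
    ∫ x in S, ‖g (u x) - g (w x)‖ ∂μ ≤ ε * μ.real S + C * ∫ x in S, dist (u x) (w x) ∂μ := by
  calc ∫ x in S, ‖g (u x) - g (w x)‖ ∂μ ≤ ∫ x in S, (ε + C * dist (u x) (w x)) ∂μ :=
        integral_mono_of_nonneg (.of_forall fun _ => norm_nonneg _)
          ((integrable_const ε).add (hint.const_mul C))
          (.of_forall fun x => by simpa only [dist_eq_norm] using hg (u x) (w x))
    _ = ε * μ.real S + C * ∫ x in S, dist (u x) (w x) ∂μ := by
        rw [integral_add (integrable_const ε) (hint.const_mul C), setIntegral_const,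
          integral_const_mul, smul_eq_mul, mul_comm]

theorem tendsto_setIntegral_norm_comp_sub_comp [IsFiniteMeasure μ] {ι X : Type*} {l : Filter ι}
    [MetricSpace X] [WeaklyLocallyCompactSpace X] [MeasurableSpace X] [BorelSpace X]
    {ν : Measure X} [ν.Regular] [NormedSpace ℝ E]
    {f : X → E} (hf : Integrable f ν) {u w : ι → α → X}
    (hu : ∀ i, MeasurePreserving (u i) μ ν) (hw : ∀ i, MeasurePreserving (w i) μ ν)
    {S : ι → Set α} (hint : ∀ i, Integrable (fun x => dist (u i x) (w i x)) (μ.restrict (S i)))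
    (hlim : Tendsto (fun i => ∫ x in S i, dist (u i x) (w i x) ∂μ) l (𝓝 0)) :
    Tendsto (fun i => ∫ x in S i, ‖f (u i x) - f (w i x)‖ ∂μ) l (𝓝 0) := by
  rw [NormedAddGroup.tendsto_nhds_zero]
  intro ε hε
  obtain ⟨g, hg_supp, hfg_eLpNorm, hg_cont, hg_mem⟩ :=
    (memLp_one_iff_integrable.2 hf).exists_hasCompactSupport_eLpNorm_sub_le ENNReal.one_ne_top
      (ENNReal.ofReal_pos.2 (by positivity : 0 < ε / 4)).ne'
  have hg : Integrable g ν := memLp_one_iff_integrable.1 hg_mem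
  have hfg : ∫ y, ‖f y - g y‖ ∂ν ≤ ε / 4 := by
    change ∫ y, ‖(f - g) y‖ ∂ν ≤ _
    rw [integral_norm_eq_lintegral_enorm (hf.sub hg).aestronglyMeasurable,
      ← eLpNorm_one_eq_lintegral_enorm]
    exact ENNReal.toReal_le_of_le_ofReal (by positivity) hfg_eLpNorm
  set m := μ.real Set.univ
  obtain ⟨C, hC⟩ := (hg_supp.uniformContinuous_of_continuous hg_cont).exists_dist_le_add_mul_dist
    (hg_supp.isCompact_range hg_cont).isBounded (ε := ε / (4 * (m + 1))) (by positivity)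
  have hlimC : Tendsto (fun i => C * ∫ x in S i, dist (u i x) (w i x) ∂μ) l (𝓝 0) := by
    simpa using hlim.const_mul C
  have hsmall := hlimC.eventually_lt_const (u := ε / 4) (by positivity)
  filter_upwards [hsmall] with i hi
  have hS : ε / (4 * (m + 1)) * μ.real (S i) ≤ ε / 4 := by
    have : μ.real (S i) ≤ m := measureReal_mono (Set.subset_univ _)
    rw [div_mul_eq_mul_div, div_le_div_iff₀ (by positivity) (by positivity)]
    nlinarith
  rw [Real.norm_of_nonneg (integral_nonneg fun _ => norm_nonneg _)]
  calc ∫ x in S i, ‖f (u i x) - f (w i x)‖ ∂μ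
      ≤ ∫ x in S i, ‖g (u i x) - g (w i x)‖ ∂μ + 2 * ∫ y, ‖f y - g y‖ ∂ν :=
        setIntegral_norm_comp_sub_comp_le (hu i) (hw i) hf hg _
    _ ≤ ε / (4 * (m + 1)) * μ.real (S i) + C * ∫ x in S i, dist (u i x) (w i x) ∂μ +
          2 * (ε / 4) := by
        gcongr
        exact setIntegral_norm_comp_sub_comp_le_of_dist_le hC (hint i)
    _ < ε := by linarith

theorem Measure.QuasiMeasurePreserving.ae_comp_iterate_eq_pow_mul {M : Type*} [Monoid M]
    {T : α → α} (hT : Measure.QuasiMeasurePreserving T μ μ) {f : α → M} {γ : M}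
    (hf : ∀ᵐ x ∂μ, f (T x) = γ * f x) (m : ℕ) : ∀ᵐ x ∂μ, f (T^[m] x) = γ ^ m * f x := by
  induction m with
  | zero => simp
  | succ m ih =>
    filter_upwards [hT.ae ih, hf] with x hm h1
    rw [Function.iterate_succ_apply, hm, h1, pow_succ, mul_assoc]

theorem MeasurePreserving.norm_eq_one_of_comp_ae_eq_mul {𝕜 : Type*} [NormedField 𝕜]
    {T : α → α} (hT : MeasurePreserving T μ μ) {f : α → 𝕜} (hf : Integrable f μ)
    (hf0 : ¬f =ᵐ[μ] 0) {γ : 𝕜} (hfe : ∀ᵐ x ∂μ, f (T x) = γ * f x) : ‖γ‖ = 1 := by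
  have hI : ∫ x, ‖f x‖ ∂μ ≠ 0 := fun h => hf0 <| by
    filter_upwards [(integral_eq_zero_iff_of_nonneg (fun _ => norm_nonneg _) hf.norm).1 h]
      with x hx
    exact norm_eq_zero.1 hx
  refine (mul_eq_right₀ hI).1 ?_
  rw [← integral_const_mul,
    ← hT.integral_comp_of_aestronglyMeasurable hf.norm.aestronglyMeasurable]
  exact integral_congr_ae (hfe.mono fun x hx => by simp only [hx, norm_mul])

theorem Ergodic.exists_pos_ae_norm_eq_of_comp_ae_eq_mul {𝕜 : Type*} [NormedField 𝕜]
    {T : α → α} (hT : Ergodic T μ) {f : α → 𝕜} (hf : Integrable f μ) (hf0 : ¬f =ᵐ[μ] 0) {γ : 𝕜}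
    (hfe : ∀ᵐ x ∂μ, f (T x) = γ * f x) : ∃ r : ℝ, 0 < r ∧ ∀ᵐ x ∂μ, ‖f x‖ = r := by
  have hγ := hT.toMeasurePreserving.norm_eq_one_of_comp_ae_eq_mul hf hf0 hfe
  obtain ⟨r, hr⟩ := hT.ae_eq_const_of_ae_eq_comp_ae hf.1.norm
    (hfe.mono fun x hx => by rw [Function.comp_apply, hx, norm_mul, hγ, one_mul])
  refine ⟨r, ?_, hr⟩
  by_contra! h
  exact hf0 (hr.mono fun x hx => norm_le_zero_iff.1 (hx.trans_le h))

theorem tendsto_zero_of_tendsto_setIntegral_norm_mul {ι : Type*} {l : Filter ι}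
    {𝕜 : Type*} [NormedField 𝕜] {f : α → 𝕜} {r c : ℝ} (hr : ∀ᵐ x ∂μ, ‖f x‖ = r) (hr0 : 0 < r)
    (hc : 0 < c) {S : ι → Set α} (hS : ∀ i, c ≤ μ.real (S i)) {a : ι → 𝕜} {g : ι → α → 𝕜}
    (hg : ∀ i, ∀ᵐ x ∂μ, g i x = a i * f x)
    (hlim : Tendsto (fun i => ∫ x in S i, ‖g i x‖ ∂μ) l (𝓝 0)) : Tendsto a l (𝓝 0) := by
  refine squeeze_zero_norm (fun i => ?_) (by simpa using hlim.div_const (r * c))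
  have hval : ∫ x in S i, ‖g i x‖ ∂μ = ‖a i‖ * r * μ.real (S i) := by
    have hae : ∀ᵐ x ∂μ.restrict (S i), ‖g i x‖ = ‖a i‖ * r := ae_restrict_of_ae <| by
      filter_upwards [hg i, hr] with x hgx hrx
      rw [hgx, norm_mul, hrx]
    rw [integral_congr_ae hae, setIntegral_const, smul_eq_mul, mul_comm]
  rw [le_div_iff₀ (by positivity), hval, mul_assoc]
  gcongr
  exact hS i

theorem MeasurePreserving.tendsto_pow_sub_pow_of_tendsto_setIntegral_dist_iterate
    {ι X 𝕜 : Type*} {l : Filter ι} [MetricSpace X] [WeaklyLocallyCompactSpace X]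
    [MeasurableSpace X] [BorelSpace X] {μ : Measure X} [IsFiniteMeasure μ] [μ.Regular]
    [NormedField 𝕜] [NormedSpace ℝ 𝕜] {T : X → X} (hT : MeasurePreserving T μ μ) {f : X → 𝕜}
    (hf : Integrable f μ) {r c : ℝ} (hr : ∀ᵐ x ∂μ, ‖f x‖ = r) (hr0 : 0 < r) (hc : 0 < c) {γ : 𝕜}
    (hfe : ∀ᵐ x ∂μ, f (T x) = γ * f x) {n : ι → ℕ} (k : ℕ) {S : ι → Set X}
    (hS : ∀ i, c ≤ μ.real (S i))
    (hint : ∀ i, Integrable (fun x => dist (T^[n i] x) (T^[k] x)) (μ.restrict (S i)))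
    (hlim : Tendsto (fun i => ∫ x in S i, dist (T^[n i] x) (T^[k] x) ∂μ) l (𝓝 0)) :
    Tendsto (fun i => γ ^ n i - γ ^ k) l (𝓝 0) := by
  have hpow := hT.quasiMeasurePreserving.ae_comp_iterate_eq_pow_mul hfe
  exact tendsto_zero_of_tendsto_setIntegral_norm_mul hr hr0 hc hS
    (fun i => (hpow (n i)).mp ((hpow k).mono fun x hk hn => by rw [hn, hk, sub_mul]))
    (tendsto_setIntegral_norm_comp_sub_comp hf (fun i => hT.iterate (n i))
      (fun _ => hT.iterate k) hint hlim)

end MeasureTheory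

theorem stmt0_general
    (Z : Set ℝ) (hZsub : Z ⊆ Set.Icc 0 1)
    (hZpos : 0 < volume Z)
    (μ : Measure ℝ) (hμ : μ = (volume Z)⁻¹ • volume.restrict Z)
    (T : ℝ → ℝ)
    (hT : Ergodic T μ)
    (c : ℝ) (hc : 0 < c)
    (n : ℕ → ℕ) (A B : ℕ → Set ℝ)
    (hA : ∀ i, μ (A i) > ENNReal.ofReal c) (hB : ∀ i, μ (B i) > ENNReal.ofReal c)
    (hlimA : Tendsto (fun i => ∫ x in A i, |T^[n i] x - x| ∂μ) atTop (nhds 0))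
    (hlimB : Tendsto (fun i => ∫ x in B i, |T^[n i] x - T x| ∂μ) atTop (nhds 0)) :
    ∀ (f : ℝ → ℂ) (γ : ℂ), Measurable f → MemLp f 2 μ →
      (∀ᵐ x ∂μ, f (T x) = γ * f x) → ∃ k : ℂ, ∀ᵐ x ∂μ, f x = k := by
  intro f γ _ hf2 hfe
  have : IsProbabilityMeasure μ := by
    rw [hμ]
    exact ProbabilityTheory.cond_isProbabilityMeasure_of_finite hZpos.ne'
      ((measure_mono hZsub).trans_lt measure_Icc_lt_top).ne
  have hTmp := hT.toMeasurePreserving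
  by_cases hf0 : f =ᵐ[μ] 0
  · exact ⟨0, hf0⟩
  have hf : Integrable f μ := hf2.integrable one_le_two
  obtain ⟨r, hr0, hr⟩ := hT.exists_pos_ae_norm_eq_of_comp_ae_eq_mul hf hf0 hfe
  have hunit : ∀ m, ∀ᵐ x ∂μ, T^[m] x ∈ Set.Icc (0 : ℝ) 1 := fun m =>
    (hTmp.iterate m).quasiMeasurePreserving.ae <| by
      rw [hμ]
      exact Measure.ae_smul_measure
        (ae_restrict_of_ae_restrict_of_subset hZsub (ae_restrict_mem measurableSet_Icc)) _
  have hdist : ∀ m k, Integrable (fun x => dist (T^[m] x) (T^[k] x)) μ := fun m k =>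
    Integrable.of_bound
      ((hTmp.iterate m).measurable.dist (hTmp.iterate k).measurable).aestronglyMeasurable 1 <| by
        filter_upwards [hunit m, hunit k] with x hm hk
        rw [Real.norm_of_nonneg dist_nonneg]
        exact Real.dist_le_of_mem_Icc_01 hm hk
  have hmeas : ∀ S : ℕ → Set ℝ, (∀ i, μ (S i) > ENNReal.ofReal c) → ∀ i, c ≤ μ.real (S i) :=
    fun S hS i => ((ENNReal.ofReal_lt_iff_lt_toReal hc.le (measure_ne_top μ _)).1 (hS i)).le
  have hγA := hTmp.tendsto_pow_sub_pow_of_tendsto_setIntegral_dist_iterate hf hr hr0 hc hfe 0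
    (hmeas A hA) (fun i => (hdist (n i) 0).restrict) hlimA
  have hγB := hTmp.tendsto_pow_sub_pow_of_tendsto_setIntegral_dist_iterate hf hr hr0 hc hfe 1
    (hmeas B hB) (fun i => (hdist (n i) 1).restrict) hlimB
  have hγ : γ = 1 := by
    simpa using
      tendsto_nhds_unique (tendsto_sub_nhds_zero_iff.1 hγB) (tendsto_sub_nhds_zero_iff.1 hγA)
  exact hT.ae_eq_const_of_ae_eq_comp_ae hf.1
    (hfe.mono fun x hx => by rw [Function.comp_apply, hx, hγ, one_mul])

/-- A prime system with many self-joinings, Lemma 3.3 (weak mixing criterion).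
If an ergodic invertible system on `Z ⊆ [0,1]` with normalized Lebesgue measure admits
sets `A i`, `B i` of measure `> c` along which `T^[n i]` is close to the identity on `A i`
and close to `T` on `B i` (in the `L¹` sense), then every measurable eigenfunction of `T`
is a.e. constant, i.e. `T` is weakly mixing. -/
theorem stmt0
    (Z : Set ℝ) (hZmeas : MeasurableSet Z) (hZsub : Z ⊆ Set.Icc 0 1)
    (hZpos : 0 < volume Z)
    (μ : Measure ℝ) (hμ : μ = (volume Z)⁻¹ • volume.restrict Z)
    (T : ℝ → ℝ) (hTbij : Function.Bijective T) (hmaps : Set.MapsTo T Z Z)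
    (hT : Ergodic T μ)
    (c : ℝ) (hc : 0 < c)
    (n : ℕ → ℕ) (A B : ℕ → Set ℝ)
    (hAmeas : ∀ i, MeasurableSet (A i)) (hBmeas : ∀ i, MeasurableSet (B i))
    (hA : ∀ i, μ (A i) > ENNReal.ofReal c) (hB : ∀ i, μ (B i) > ENNReal.ofReal c)
    (hlimA : Tendsto (fun i => ∫ x in A i, |T^[n i] x - x| ∂μ) atTop (nhds 0))
    (hlimB : Tendsto (fun i => ∫ x in B i, |T^[n i] x - T x| ∂μ) atTop (nhds 0)) :
    ∀ (f : ℝ → ℂ) (γ : ℂ), Measurable f → MemLp f 2 μ →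
      (∀ᵐ x ∂μ, f (T x) = γ * f x) → ∃ k : ℂ, ∀ᵐ x ∂μ, f x = k :=
  stmt0_general Z hZsub hZpos μ hμ T hT c hc n A B hA hB hlimA hlimB
end

section
/- Let (Z, λ, T) be an ergodic measure-preserving system, let f be an eigenfunction of T with |f| = 1 a.e. and eigenvalue γ on the unit circle. For every ε > 0 there exist δ > 0 and a measurable set U with λ(U) > 1 − ε such that: whenever x, T^n x ∈ U and |T^n x − x| < δ (with Z ⊂ [0,1]), we have |1 − γ^n| < ε. -/
/-!
Along the orbit of an eigenfunction `f` one has `f (T^[n] x) = γ ^ n * f x`, so when `|f x| = 1`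
the quantity `‖1 - γ ^ n‖` is the distance between `f (T^[n] x)` and `f x`. Lusin-style, `f` is
within `ε / 3` of a uniformly continuous `g` off a set of small measure (approximate `f` in `L¹`
by a compactly supported continuous function and apply Markov's inequality). If `x` and
`T^[n] x` are `δ`-close points of the good set, the triangle inequality through `g` gives
`‖1 - γ ^ n‖ < ε`.
-/

open MeasureTheory
open scoped ENNReal

theorem ENNReal.sub_lt_sub_left_of_lt {a b c : ℝ≥0∞} (hc : c ≠ ∞) (hac : a < c)
    (hab : a < b) : c - b < c - a := by
  rw [lt_tsub_iff_right]
  rcases le_total b c with hbc | hcb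
  · calc c - b + a < c - b + b :=
          ENNReal.add_lt_add_left (ne_top_of_le_ne_top hc tsub_le_self) hab
      _ = c := tsub_add_cancel_of_le hbc
  · rwa [tsub_eq_zero_of_le hcb, zero_add]

theorem MeasureTheory.Measure.QuasiMeasurePreserving.ae_forall_iterate_eq_pow_mul
    {α M : Type*} [MeasurableSpace α] [Monoid M] {μ : Measure α} {T : α → α}
    (hT : Measure.QuasiMeasurePreserving T μ μ) {f : α → M} {γ : M}
    (heig : ∀ᵐ x ∂μ, f (T x) = γ * f x) :
    ∀ᵐ x ∂μ, ∀ n : ℕ, f (T^[n] x) = γ ^ n * f x := by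
  rw [ae_all_iff]
  intro n
  induction n with
  | zero => simp
  | succ n ih =>
    filter_upwards [ih, (hT.iterate n).ae heig] with x hx hTx
    rw [Function.iterate_succ_apply', hTx, hx, pow_succ', mul_assoc]

theorem MeasureTheory.Integrable.exists_uniformContinuous_forall_mem_norm_sub_lt
    {α E : Type*} [MetricSpace α] [WeaklyLocallyCompactSpace α] [MeasurableSpace α]
    [BorelSpace α] [NormedAddCommGroup E] [NormedSpace ℝ E] {μ : Measure α} [μ.Regular]
    {f : α → E} (hf : Integrable f μ) {ε : ℝ} (hε : 0 < ε) {η : ℝ≥0∞}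
    (hη : η ≠ 0) :
    ∃ g : α → E, UniformContinuous g ∧
      ∃ G : Set α, MeasurableSet G ∧ μ Gᶜ ≤ η ∧ ∀ x ∈ G, ‖f x - g x‖ < ε := by
  have hε' : ENNReal.ofReal ε ≠ 0 := (ENNReal.ofReal_pos.2 hε).ne'
  obtain ⟨g, hg_supp, hg_near, hg_cont, hg_int⟩ :=
    hf.exists_hasCompactSupport_lintegral_sub_le (mul_ne_zero hε' hη)
  set B := {x | ENNReal.ofReal ε ≤ ‖f x - g x‖ₑ}
  have hB : μ B ≤ η := by
    have markov := mul_meas_ge_le_lintegral₀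
      (hf.aestronglyMeasurable.sub hg_int.aestronglyMeasurable).enorm (ENNReal.ofReal ε)
    exact (ENNReal.mul_le_mul_iff_right hε' ENNReal.ofReal_ne_top).1 (markov.trans hg_near)
  refine ⟨g, hg_supp.uniformContinuous_of_continuous hg_cont, (toMeasurable μ B)ᶜ,
    (measurableSet_toMeasurable μ B).compl, by rwa [compl_compl, measure_toMeasurable],
    fun x hx => ?_⟩
  have hxB : x ∉ B := fun h => hx (subset_toMeasurable μ B h)
  simp only [B, Set.mem_ofPred_eq, not_le, ← ofReal_norm, ENNReal.ofReal_lt_ofReal_iff'] at hxB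
  exact hxB.1

theorem MeasureTheory.Measure.QuasiMeasurePreserving.exists_norm_one_sub_pow_lt_of_dist_lt
    {α 𝕜 : Type*} [MetricSpace α] [WeaklyLocallyCompactSpace α] [MeasurableSpace α]
    [BorelSpace α] [RCLike 𝕜] {μ : Measure α} [IsProbabilityMeasure μ] [μ.Regular]
    {T : α → α} (hT : Measure.QuasiMeasurePreserving T μ μ) {f : α → 𝕜} {γ : 𝕜}
    (hf : AEStronglyMeasurable f μ) (hfabs : ∀ᵐ x ∂μ, ‖f x‖ = 1)
    (heig : ∀ᵐ x ∂μ, f (T x) = γ * f x) {ε : ℝ} (hε : 0 < ε) :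
    ∃ δ > 0, ∃ U : Set α, MeasurableSet U ∧ 1 - ENNReal.ofReal ε < μ U ∧
      ∀ (x : α) (n : ℕ), x ∈ U → T^[n] x ∈ U → dist (T^[n] x) x < δ →
        ‖1 - γ ^ n‖ < ε := by
  have hf_int : Integrable f μ := .of_bound hf 1 (hfabs.mono fun x hx => hx.le)
  set η : ℝ≥0∞ := min (ENNReal.ofReal ε) 1 / 2
  have hη : η ≠ 0 := (ENNReal.half_pos (by simp [hε])).ne'
  have hη_lt : η < min (ENNReal.ofReal ε) 1 :=
    ENNReal.half_lt_self (by simp [hε]) (min_le_right _ _ |>.trans_lt ENNReal.one_lt_top).ne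
  obtain ⟨g, hg, G, hG, hGc, hfg⟩ :=
    hf_int.exists_uniformContinuous_forall_mem_norm_sub_lt (by positivity : 0 < ε / 3) hη
  obtain ⟨hGc_ε, hGc_one⟩ := lt_min_iff.1 (hGc.trans_lt hη_lt)
  obtain ⟨δ, hδ, hgδ⟩ := Metric.uniformContinuous_iff.1 hg (ε / 3) (by positivity)
  obtain ⟨S, hS_ae, hS, horbit⟩ :=
    (hfabs.and (hT.ae_forall_iterate_eq_pow_mul heig)).exists_measurable_mem
  refine ⟨δ, hδ, G ∩ S, hG.inter hS, ?_, fun x n hx hnx hclose => ?_⟩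
  · rw [measure_inter_conull (mem_ae_iff.1 hS_ae), ← compl_compl G,
      prob_compl_eq_one_sub hG.compl]
    exact ENNReal.sub_lt_sub_left_of_lt ENNReal.one_ne_top hGc_one hGc_ε
  · obtain ⟨hfx, hfTx⟩ := horbit x hx.2
    have hdist : ‖1 - γ ^ n‖ = dist (f (T^[n] x)) (f x) := by
      rw [dist_eq_norm, hfTx n, ← sub_one_mul, norm_mul, hfx, mul_one, norm_sub_rev]
    calc ‖1 - γ ^ n‖
        ≤ dist (f (T^[n] x)) (g (T^[n] x)) + dist (g (T^[n] x)) (g x) + dist (g x) (f x) :=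
          hdist ▸ dist_triangle4 _ _ _ _
      _ < ε / 3 + ε / 3 + ε / 3 := by
          gcongr
          · exact dist_eq_norm (f _) _ ▸ hfg _ hnx.1
          · exact hgδ hclose
          · exact dist_comm (f x) _ ▸ dist_eq_norm (f x) _ ▸ hfg _ hx.1
      _ = ε := by ring

theorem stmt1_general
    (Z : Set ℝ) (hZsub : Z ⊆ Set.Icc 0 1)
    (hZpos : 0 < volume Z)
    (μ : Measure ℝ) (hμ : μ = (volume Z)⁻¹ • volume.restrict Z)
    (T : ℝ → ℝ) (hT : Ergodic T μ)
    (f : ℝ → ℂ) (γ : ℂ) (hf : Measurable f)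
    (hfabs : ∀ᵐ x ∂μ, ‖f x‖ = 1)
    (heig : ∀ᵐ x ∂μ, f (T x) = γ * f x) :
    ∀ ε > (0 : ℝ), ∃ δ > (0 : ℝ), ∃ U : Set ℝ, MeasurableSet U ∧
      μ U > 1 - ENNReal.ofReal ε ∧
      ∀ (x : ℝ) (n : ℕ), x ∈ U → T^[n] x ∈ U → |T^[n] x - x| < δ →
        ‖1 - γ ^ n‖ < ε := by
  intro ε hε
  have hZfin : volume Z ≠ ⊤ := ((measure_mono hZsub).trans_lt (by simp)).ne
  have : IsProbabilityMeasure μ :=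
    hμ ▸ ProbabilityTheory.cond_isProbabilityMeasure_of_finite hZpos.ne' hZfin
  obtain ⟨δ, hδ, U, hU, hμU, hclose⟩ :=
    hT.quasiMeasurePreserving.exists_norm_one_sub_pow_lt_of_dist_lt
      hf.aestronglyMeasurable hfabs heig hε
  exact ⟨δ, hδ, U, hU, hμU, fun x n hx hnx h => hclose x n hx hnx (by rwa [Real.dist_eq])⟩

/-- Lusin-theorem step: for an ergodic system on `Z ⊆ [0,1]` with an eigenfunction `f`
of modulus one and eigenvalue `γ` on the unit circle, for every `ε > 0` there are `δ > 0`
and a set `U` of measure `> 1 - ε` such that whenever `x` and `T^[n] x` both lie in `U`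
and `|T^[n] x - x| < δ`, one has `|1 - γ ^ n| < ε`. -/
theorem stmt1
    (Z : Set ℝ) (hZmeas : MeasurableSet Z) (hZsub : Z ⊆ Set.Icc 0 1)
    (hZpos : 0 < volume Z)
    (μ : Measure ℝ) (hμ : μ = (volume Z)⁻¹ • volume.restrict Z)
    (T : ℝ → ℝ) (hT : Ergodic T μ)
    (f : ℝ → ℂ) (γ : ℂ) (hf : Measurable f)
    (hfabs : ∀ᵐ x ∂μ, ‖f x‖ = 1)
    (hγ : ‖γ‖ = 1)
    (heig : ∀ᵐ x ∂μ, f (T x) = γ * f x) :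
    ∀ ε > (0 : ℝ), ∃ δ > (0 : ℝ), ∃ U : Set ℝ, MeasurableSet U ∧
      μ U > 1 - ENNReal.ofReal ε ∧
      ∀ (x : ℝ) (n : ℕ), x ∈ U → T^[n] x ∈ U → |T^[n] x - x| < δ →
        ‖1 - γ ^ n‖ < ε :=
  stmt1_general Z hZsub hZpos μ hμ T hT f γ hf hfabs heig
end

section
/- For every ε > 0 there exists k₀ such that for all k ≥ k₀: 8^{(1−ε)·10^k} < r_{10^k−1} < 8^{(1+ε)·10^k}, where (r_n) is any sequence of positive reals satisfying r_{ℓ+1} = 8·r_ℓ − 1 for all ℓ ∉ E = {10^j : j ≥ 2}, and 1 ≤ r_{ℓ+1}/r_ℓ ≤ 8 for all ℓ, with r_1 ≥ 2. -/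
/-! With `s n = r n - 1/7` the recurrence `r ↦ 8 r - 1` reads `s ↦ 8 s`. So `s` is multiplied by
`8` at every step off `E` and does not decrease on `E`; since `E` meets `[0, 10^k)` in at most `k`
points, `8^(10^k - 1 - k) s 0 ≤ s (10^k - 1)`. Together with `r n ≤ 8^n r 0` this pins
`log₈ r (10^k - 1)` to `10^k + O(k)`, and `k = o(10^k)`. -/

open Filter Finset Real Asymptotics

theorem pow_mul_le_pow_card_filter_mul {s : ℕ → ℝ} {a : ℝ} (ha : 0 ≤ a) (S : Set ℕ)
    [DecidablePred (· ∈ S)] (hgen : ∀ n ∉ S, a * s n ≤ s (n + 1))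
    (hexc : ∀ n ∈ S, s n ≤ s (n + 1)) (n : ℕ) :
    a ^ n * s 0 ≤ a ^ #{m ∈ range n | m ∈ S} * s n := by
  induction n with
  | zero => simp
  | succ n ih =>
    have step : a ^ (n + 1) * s 0 ≤ a * (a ^ #{m ∈ range n | m ∈ S} * s n) := by
      rw [pow_succ', mul_assoc]
      exact mul_le_mul_of_nonneg_left ih ha
    rw [range_add_one, filter_insert]
    by_cases hn : n ∈ S
    · rw [if_pos hn, card_insert_of_notMem (by simp)]
      calc a ^ (n + 1) * s 0 ≤ a * (a ^ #{m ∈ range n | m ∈ S} * s n) := step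
        _ ≤ a * (a ^ #{m ∈ range n | m ∈ S} * s (n + 1)) := by gcongr; exact hexc n hn
        _ = _ := by ring
    · rw [if_neg hn]
      calc a ^ (n + 1) * s 0 ≤ a * (a ^ #{m ∈ range n | m ∈ S} * s n) := step
        _ = a ^ #{m ∈ range n | m ∈ S} * (a * s n) := by ring
        _ ≤ _ := by gcongr; exact hgen n hn

theorem card_filter_range_le_of_subset_range_pow {b k n : ℕ} (hb : 1 < b) {S : Set ℕ}
    [DecidablePred (· ∈ S)] (hS : S ⊆ Set.range (b ^ ·)) (hn : n ≤ b ^ k) :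
    #{m ∈ range n | m ∈ S} ≤ k := by
  calc #{m ∈ range n | m ∈ S} ≤ #((range k).image (b ^ ·)) := card_le_card ?_
    _ ≤ k := card_image_le.trans (card_range k).le
  intro m hm
  rw [mem_filter, mem_range] at hm
  obtain ⟨j, rfl⟩ := hS hm.2
  exact mem_image_of_mem _ (mem_range.2 ((Nat.pow_lt_pow_iff_right hb).1 (hm.1.trans_le hn)))

theorem eventually_natCast_add_lt_mul_pow (C : ℝ) {ε d : ℝ} (hε : 0 < ε) (hd : 1 < d) :
    ∀ᶠ k : ℕ in atTop, (k : ℝ) + C < ε * d ^ k := by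
  have hconst : (fun _ : ℕ ↦ C) =o[atTop] fun k ↦ d ^ k :=
    isLittleO_const_left.2 <| Or.inr <| by
      simpa [Function.comp_def, abs_of_pos (zero_lt_one.trans hd)] using
        tendsto_pow_atTop_atTop_of_one_lt hd
  filter_upwards [((isLittleO_coe_const_pow_of_one_lt hd).add hconst).def (half_pos hε)]
    with k hk
  have hdk : 0 < d ^ k := pow_pos (zero_lt_one.trans hd) k
  rw [norm_of_nonneg hdk.le, norm_eq_abs] at hk
  linarith [le_abs_self ((k : ℝ) + C), mul_pos hε hdk]

theorem eventually_rpow_lt_of_pow_mul_le {b c ε : ℝ} {x : ℕ → ℝ} (hb : 1 < b) (hε : 0 < ε)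
    (hc : 0 < c) (h : ∀ k, b ^ (10 ^ k - 1) * c ≤ b ^ k * x k) :
    ∀ᶠ k : ℕ in atTop, b ^ ((1 - ε) * (10 : ℝ) ^ k) < x k := by
  filter_upwards [eventually_natCast_add_lt_mul_pow (1 - logb b c) hε (by norm_num : (1 : ℝ) < 10)]
    with k hk
  have hcast : ((10 ^ k - 1 : ℕ) : ℝ) = 10 ^ k - 1 := by
    rw [Nat.cast_pred (by positivity)]; push_cast; rfl
  calc b ^ ((1 - ε) * (10 : ℝ) ^ k) < b ^ (((10 ^ k - 1 : ℕ) : ℝ) + logb b c - k) :=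
        rpow_lt_rpow_of_exponent_lt hb (by rw [hcast]; linarith)
    _ = b ^ (10 ^ k - 1) * c / b ^ k := by
        rw [rpow_sub (by linarith), rpow_add (by linarith), rpow_logb (by linarith) hb.ne' hc,
          rpow_natCast, rpow_natCast]
    _ ≤ x k := by
        have hbk : 0 < b ^ k := pow_pos (by linarith) k
        rw [div_le_iff₀ hbk]
        linarith [h k]

theorem eventually_lt_rpow_of_le_pow_mul {b C ε : ℝ} {x : ℕ → ℝ} (hb : 1 < b) (hε : 0 < ε)
    (hC : 0 < C) (h : ∀ k, x k ≤ b ^ (10 ^ k - 1) * C) :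
    ∀ᶠ k : ℕ in atTop, x k < b ^ ((1 + ε) * (10 : ℝ) ^ k) := by
  filter_upwards [eventually_natCast_add_lt_mul_pow (logb b C - 1) hε (by norm_num : (1 : ℝ) < 10)]
    with k hk
  have hcast : ((10 ^ k - 1 : ℕ) : ℝ) = 10 ^ k - 1 := by
    rw [Nat.cast_pred (by positivity)]; push_cast; rfl
  calc x k ≤ b ^ (10 ^ k - 1) * C := h k
    _ = b ^ (((10 ^ k - 1 : ℕ) : ℝ) + logb b C) := by
        rw [rpow_add (by linarith), rpow_logb (by linarith) hb.ne' hC, rpow_natCast]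
    _ < b ^ ((1 + ε) * (10 : ℝ) ^ k) :=
        rpow_lt_rpow_of_exponent_lt hb (by rw [hcast]; linarith [(k.cast_nonneg : (0 : ℝ) ≤ k)])

/-- Growth rate of the heights sequence: for a sequence of positive reals with
`r (ℓ+1) = 8 r ℓ - 1` off the sparse set `E = {10^j : j ≥ 2}`, ratios between `1` and `8`
everywhere, and `r 1 ≥ 2`, for every `ε > 0` and all large `k` one has
`8^{(1-ε)·10^k} < r (10^k - 1) < 8^{(1+ε)·10^k}`. -/
theorem stmt7
    (E : Set ℕ) (hE : E = {n | ∃ j : ℕ, 2 ≤ j ∧ n = 10 ^ j})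
    (r : ℕ → ℝ) (hpos : ∀ n, 0 < r n) (hr1 : 2 ≤ r 1)
    (hrec : ∀ ℓ, ℓ ∉ E → r (ℓ + 1) = 8 * r ℓ - 1)
    (hratio : ∀ ℓ, 1 ≤ r (ℓ + 1) / r ℓ ∧ r (ℓ + 1) / r ℓ ≤ 8) :
    ∀ ε > (0 : ℝ), ∃ k₀ : ℕ, ∀ k ≥ k₀,
      (8 : ℝ) ^ ((1 - ε) * (10 : ℝ) ^ k) < r (10 ^ k - 1) ∧
      r (10 ^ k - 1) < (8 : ℝ) ^ ((1 + ε) * (10 : ℝ) ^ k) := by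
  classical
  intro ε hε
  have hmono : ∀ ℓ, r ℓ ≤ r (ℓ + 1) := fun ℓ ↦ by
    simpa using (le_div_iff₀ (hpos ℓ)).1 (hratio ℓ).1
  have hgrowth : ∀ ℓ, r (ℓ + 1) ≤ 8 * r ℓ := fun ℓ ↦ (div_le_iff₀ (hpos ℓ)).1 (hratio ℓ).2
  have hE_pow : E ⊆ Set.range (10 ^ ·) := by rw [hE]; rintro _ ⟨j, -, rfl⟩; exact ⟨j, rfl⟩
  have hE0 : 0 ∉ E := fun h ↦ by obtain ⟨j, hj⟩ := hE_pow h; exact pow_ne_zero j (by norm_num) hj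
  have hs0 : 0 < r 0 - 7⁻¹ := by linarith [hrec 0 hE0]
  have hs : ∀ n, 8 ^ n * (r 0 - 7⁻¹) ≤ 8 ^ #{m ∈ range n | m ∈ E} * (r n - 7⁻¹) :=
    pow_mul_le_pow_card_filter_mul (s := fun n ↦ r n - 7⁻¹) (by norm_num) E
      (fun n hn ↦ by rw [hrec n hn]; linarith) (fun n _ ↦ by linarith [hmono n])
  have hlow : ∀ k, 8 ^ (10 ^ k - 1) * (r 0 - 7⁻¹) ≤ 8 ^ k * (r (10 ^ k - 1) - 7⁻¹) := fun k ↦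
    (hs _).trans <| by
      gcongr
      · linarith [monotone_nat_of_le_succ hmono (Nat.zero_le (10 ^ k - 1))]
      · norm_num
      · exact card_filter_range_le_of_subset_range_pow (by norm_num) hE_pow (Nat.sub_le _ _)
  refine eventually_atTop.1 ?_
  filter_upwards [eventually_rpow_lt_of_pow_mul_le (by norm_num) hε hs0 hlow,
    eventually_lt_rpow_of_le_pow_mul (by norm_num) hε (hpos 0)
      fun k ↦ le_geom (by norm_num) _ fun ℓ _ ↦ hgrowth ℓ] with k hk_low hk_up
  exact ⟨hk_low.trans (by linarith), hk_up⟩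
end

section
/- There exists a universal constant C such that the following holds. Let F_1,...,F_K be i.i.d. {0,1}-valued random variables on a probability space (Ω, μ) with p = μ(F_i = 0) satisfying δ/K ≤ p ≤ 1 − δ/K for some δ > 0, and let H(ω) = ∑_{i=1}^K F_i(ω). Then H is min{δ²/C, 1/C}-spread, where H is called η-spread if μ(⋃_{i η-spread} H^{−1}(i)) > η, and an integer i is (H, η)-spread if max{μ(H^{−1}(i+1)), μ(H^{−1}(i−1))} > η·μ(H^{−1}(i)). -/
/-!
With `q = 1 - p`, independence makes the law of `H` the binomial mass function
`n ↦ C(K, n) qⁿ (1 - q)^(K - n)` on `{0, …, K}`. For `η = min (δ² / 4) (1 / 4)` every value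
in this range is `(H, η)`-spread, so the spread values carry mass `1 > η`.
In the interior, `C(K, n)² ≤ 4 C(K, n + 1) C(K, n - 1)` bounds the mass at `n` by twice the
geometric mean of the masses at `n ± 1`, so the larger neighbour carries at least half of it.
At `n = 0` the mass ratio of `1` to `0` is at least `K q ≥ δ > η`, and `n = K` is the same
situation with `p` and `q` swapped.
-/

open MeasureTheory ProbabilityTheory

theorem Nat.choose_succ_sq_le_four_mul {n k : ℕ} (h : k + 2 ≤ n) :
    n.choose (k + 1) ^ 2 ≤ 4 * (n.choose (k + 2) * n.choose k) := by
  obtain ⟨m, rfl⟩ : ∃ m, n = k + 2 + m := ⟨n - (k + 2), by omega⟩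
  have h₁ := Nat.choose_succ_right_eq (k + 2 + m) (k + 1)
  have h₂ := Nat.choose_succ_right_eq (k + 2 + m) k
  rw [show k + 2 + m - (k + 1) = m + 1 by omega] at h₁
  rw [show k + 2 + m - k = m + 2 by omega] at h₂
  refine Nat.le_of_mul_le_mul_right (c := (k + 2) * (m + 2)) ?_ (by positivity)
  calc (k + 2 + m).choose (k + 1) ^ 2 * ((k + 2) * (m + 2))
      ≤ (k + 2 + m).choose (k + 1) ^ 2 * (4 * ((m + 1) * (k + 1))) :=
        Nat.mul_le_mul_left _ (by nlinarith)
    _ = 4 * (((k + 2 + m).choose (k + 1) * (m + 1)) * ((k + 2 + m).choose (k + 1) * (k + 1))) := by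
        ring
    _ = 4 * ((k + 2 + m).choose (k + 2) * (k + 2 + m).choose k) * ((k + 2) * (m + 2)) := by
        rw [← h₁, h₂]; ring

theorem lt_max_of_sq_le_four_mul {x y z e : ℝ} (hx : 0 < x) (hy : 0 ≤ y) (hz : 0 ≤ z)
    (he : e < 1 / 2) (h : x ^ 2 ≤ 4 * (y * z)) : e * x < max y z := by
  by_contra! hle
  have hy' : y ≤ e * x := (le_max_left y z).trans hle
  have hz' : z ≤ e * x := (le_max_right y z).trans hle
  have hex : e * x < x / 2 := by nlinarith
  nlinarith [mul_le_mul hy' hz' hz (hy.trans hy'), mul_self_lt_mul_self (hy.trans hy') hex]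

theorem min_sq_div_four_one_div_four_lt {δ : ℝ} (hδ : 0 < δ) : min (δ ^ 2 / 4) (1 / 4) < δ := by
  rcases le_or_gt δ 1 with h | h
  · exact (min_le_left _ _).trans_lt (by nlinarith)
  · exact (min_le_right _ _).trans_lt (by linarith)

noncomputable def binomialMass (K : ℕ) (q : ℝ) (n : ℕ) : ℝ :=
  K.choose n * q ^ n * (1 - q) ^ (K - n)

section binomialMass

variable {K n : ℕ} {q η : ℝ}

theorem binomialMass_pos (hq₀ : 0 < q) (hq₁ : q < 1) (hn : n ≤ K) : 0 < binomialMass K q n := by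
  have : (0 : ℝ) < K.choose n := by exact_mod_cast Nat.choose_pos hn
  have : 0 < 1 - q := by linarith
  unfold binomialMass
  positivity

theorem binomialMass_symm (hn : n ≤ K) : binomialMass K q (K - n) = binomialMass K (1 - q) n := by
  simp only [binomialMass, Nat.choose_symm hn, Nat.sub_sub_self hn, sub_sub_cancel]
  ring

theorem binomialMass_succ_sq_le {k : ℕ} (hk : k + 2 ≤ K) :
    binomialMass K q (k + 1) ^ 2 ≤ 4 * (binomialMass K q (k + 2) * binomialMass K q k) := by
  obtain ⟨m, rfl⟩ : ∃ m, K = k + 2 + m := ⟨K - (k + 2), by omega⟩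
  have hchoose : ((k + 2 + m).choose (k + 1) : ℝ) ^ 2 ≤
      4 * ((k + 2 + m).choose (k + 2) * (k + 2 + m).choose k) := by
    exact_mod_cast Nat.choose_succ_sq_le_four_mul hk
  simp only [binomialMass, show k + 2 + m - (k + 1) = m + 1 by omega,
    show k + 2 + m - (k + 2) = m by omega, show k + 2 + m - k = m + 2 by omega]
  calc ((k + 2 + m).choose (k + 1) * q ^ (k + 1) * (1 - q) ^ (m + 1) : ℝ) ^ 2
      = ((k + 2 + m).choose (k + 1) : ℝ) ^ 2 * (q ^ (k + 1) * (1 - q) ^ (m + 1)) ^ 2 := by ring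
    _ ≤ 4 * ((k + 2 + m).choose (k + 2) * (k + 2 + m).choose k) *
          (q ^ (k + 1) * (1 - q) ^ (m + 1)) ^ 2 := by gcongr
    _ = _ := by ring

theorem mul_binomialMass_zero_lt_one (hq₀ : 0 ≤ q) (hq₁ : q < 1) (hη : η < K * q) :
    η * binomialMass K q 0 < binomialMass K q 1 := by
  have h₀ : binomialMass K q 0 = (1 - q) ^ K := by simp [binomialMass]
  calc η * binomialMass K q 0 < K * q * (1 - q) ^ K := by
        rw [h₀]; exact mul_lt_mul_of_pos_right hη (pow_pos (by linarith) K)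
    _ ≤ K * q * (1 - q) ^ (K - 1) :=
        mul_le_mul_of_nonneg_left (pow_le_pow_of_le_one (by linarith) (by linarith) (Nat.sub_le K 1))
          (by positivity)
    _ = binomialMass K q 1 := by simp [binomialMass]

theorem mul_binomialMass_lt_succ_or_pred (hq₀ : 0 < q) (hq₁ : q < 1) (hη : η < 1 / 2)
    (hηq : η < K * q) (hηq' : η < K * (1 - q)) (hn : n ≤ K) :
    η * binomialMass K q n < binomialMass K q (n + 1) ∨
      0 < n ∧ η * binomialMass K q n < binomialMass K q (n - 1) := by
  rcases Nat.eq_zero_or_pos n with rfl | hn₀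
  · exact .inl (mul_binomialMass_zero_lt_one hq₀.le hq₁ hηq)
  obtain ⟨k, rfl⟩ : ∃ k, n = k + 1 := ⟨n - 1, by omega⟩
  rcases Nat.lt_or_ge (k + 1) K with hk | hk
  · have h := lt_max_of_sq_le_four_mul (binomialMass_pos hq₀ hq₁ hn)
      (binomialMass_pos hq₀ hq₁ hk).le (binomialMass_pos hq₀ hq₁ (by omega)).le hη
      (binomialMass_succ_sq_le hk)
    exact (lt_max_iff.1 h).imp id fun h => ⟨hn₀, h⟩
  · obtain rfl : K = k + 1 := by omega
    have h := mul_binomialMass_zero_lt_one (sub_nonneg.2 hq₁.le) (by linarith) hηq'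
    rw [← binomialMass_symm (Nat.zero_le _), ← binomialMass_symm (by omega), Nat.sub_zero,
      Nat.add_sub_cancel] at h
    exact .inr ⟨hn₀, h⟩

end binomialMass

open Finset in
theorem sum_eq_card_filter_eq_one {ι : Type*} [Fintype ι] {f : ι → ℤ}
    (h : ∀ i, f i = 0 ∨ f i = 1) : ∑ i, f i = #{i | f i = 1} := by
  rw [← sum_boole]
  refine sum_congr rfl fun i _ => ?_
  rcases h i with h | h <;> simp [h]

section BernoulliSum

open Finset

variable {Ω ι : Type*} [Fintype ι] [DecidableEq ι] {F : ι → Ω → ℤ}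

theorem Fintype.prod_ite_mem_eq_pow_mul_pow {M : Type*} [CommMonoid M] (S : Finset ι) (a b : M) :
    ∏ i, (if i ∈ S then a else b) = a ^ #S * b ^ (Fintype.card ι - #S) := by
  rw [prod_ite, prod_const, prod_const, filter_mem_eq_inter, univ_inter, filter_not,
    filter_mem_eq_inter, univ_inter, ← compl_eq_univ_sdiff, card_compl]

theorem setOf_filter_eq_one_eq_iInter (h01 : ∀ i ω, F i ω = 0 ∨ F i ω = 1) (S : Finset ι) :
    {ω | ({i | F i ω = 1} : Finset ι) = S} = ⋂ i, F i ⁻¹' {if i ∈ S then 1 else 0} := by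
  ext ω
  simp only [Set.mem_ofPred_eq, Set.mem_iInter, Set.mem_preimage, Set.mem_singleton_iff,
    Finset.ext_iff, mem_filter, mem_univ, true_and]
  refine forall_congr' fun i => ?_
  rcases h01 i ω with h | h <;> by_cases hi : i ∈ S <;> simp [h, hi]

variable [MeasurableSpace Ω] {μ : Measure Ω}

theorem measure_iInter_preimage_ite (hind : iIndepFun F μ) {a b : ENNReal}
    (h₀ : ∀ i, μ {ω | F i ω = 0} = b) (h₁ : ∀ i, μ {ω | F i ω = 1} = a) (S : Finset ι) :
    μ (⋂ i, F i ⁻¹' {if i ∈ S then 1 else 0}) = a ^ #S * b ^ (Fintype.card ι - #S) := by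
  have h := hind.measure_inter_preimage_eq_mul univ fun i _ => measurableSet_singleton
    (if i ∈ S then (1 : ℤ) else 0)
  simp only [mem_univ, Set.iInter_true] at h
  rw [h, ← Fintype.prod_ite_mem_eq_pow_mul_pow]
  refine prod_congr rfl fun i _ => ?_
  split_ifs
  exacts [h₁ i, h₀ i]

theorem measure_sum_eq_binomialMass [IsProbabilityMeasure μ] (hmeas : ∀ i, Measurable (F i))
    (h01 : ∀ i ω, F i ω = 0 ∨ F i ω = 1) (hind : iIndepFun F μ) {p : ℝ} (hp₀ : 0 ≤ p)
    (hp₁ : p ≤ 1) (hp : ∀ i, μ {ω | F i ω = 0} = ENNReal.ofReal p) (n : ℕ) :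
    μ {ω | ∑ i, F i ω = n} = ENNReal.ofReal (binomialMass (Fintype.card ι) (1 - p) n) := by
  have hq : ∀ i, μ {ω | F i ω = 1} = ENNReal.ofReal (1 - p) := fun i => by
    have hcompl : {ω | F i ω = 1} = {ω | F i ω = 0}ᶜ := by
      ext ω; rcases h01 i ω with h | h <;> simp [h]
    rw [hcompl, prob_compl_eq_one_sub (s := {ω | F i ω = 0}) (hmeas i (measurableSet_singleton 0)),
      hp i, ENNReal.ofReal_sub 1 hp₀, ENNReal.ofReal_one]
  have hfiber : ∀ S : Finset ι, {ω | ({i | F i ω = 1} : Finset ι) = S} =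
      (fun ω => ({i | F i ω = 1} : Finset ι)) ⁻¹' {S} := fun S => rfl
  have hlevel : {ω | ∑ i, F i ω = n} =
      (fun ω => ({i | F i ω = 1} : Finset ι)) ⁻¹' ↑(powersetCard n (univ : Finset ι)) := by
    ext ω
    simp [sum_eq_card_filter_eq_one (h01 · ω)]
  rw [hlevel, ← sum_measure_preimage_singleton]
  · rw [sum_congr rfl fun S hS => by
      rw [← hfiber, setOf_filter_eq_one_eq_iInter h01, measure_iInter_preimage_ite hind hp hq,
        (mem_powersetCard.1 hS).2]]
    rw [sum_const, card_powersetCard, card_univ, nsmul_eq_mul, binomialMass, sub_sub_cancel,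
      ← ENNReal.ofReal_pow (by linarith), ← ENNReal.ofReal_pow hp₀, ← ENNReal.ofReal_natCast,
      ← ENNReal.ofReal_mul (by positivity), ← ENNReal.ofReal_mul (by positivity), mul_assoc]
  · intro S _
    rw [← hfiber, setOf_filter_eq_one_eq_iInter h01]
    exact .iInter fun i => hmeas i (measurableSet_singleton _)

end BernoulliSum

theorem ofReal_mul_measure_lt_max_succ_pred {Ω : Type*} [MeasurableSpace Ω] {μ : Measure Ω}
    {X : Ω → ℤ} {K n : ℕ} {q η : ℝ}
    (hlaw : ∀ m : ℕ, μ {ω | X ω = m} = ENNReal.ofReal (binomialMass K q m))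
    (hq₀ : 0 < q) (hq₁ : q < 1) (hη₀ : 0 ≤ η) (hη : η < 1 / 2) (hηq : η < K * q)
    (hηq' : η < K * (1 - q)) (hn : n ≤ K) :
    ENNReal.ofReal η * μ {ω | X ω = n} < max (μ {ω | X ω = n + 1}) (μ {ω | X ω = n - 1}) := by
  have hnonneg : 0 ≤ η * binomialMass K q n := mul_nonneg hη₀ (binomialMass_pos hq₀ hq₁ hn).le
  rw [hlaw, ← ENNReal.ofReal_mul hη₀]
  rcases mul_binomialMass_lt_succ_or_pred hq₀ hq₁ hη hηq hηq' hn with h | ⟨hn₀, h⟩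
  · refine lt_max_of_lt_left ?_
    rw [show (n : ℤ) + 1 = ((n + 1 : ℕ) : ℤ) by push_cast; rfl, hlaw]
    exact (ENNReal.ofReal_lt_ofReal_iff_of_nonneg hnonneg).2 h
  · refine lt_max_of_lt_right ?_
    rw [show (n : ℤ) - 1 = ((n - 1 : ℕ) : ℤ) by omega, hlaw]
    exact (ENNReal.ofReal_lt_ofReal_iff_of_nonneg hnonneg).2 h

/-- Spread property of binomial sums: there is a universal constant `C` such that for
i.i.d. `{0,1}`-valued random variables `F i` with `p = μ(F i = 0)` satisfying
`δ/K ≤ p ≤ 1 - δ/K`, the sum `H = ∑ F i` is `min{δ²/C, 1/C}`-spread: the set of values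
`j` for which an adjacent value `j ± 1` carries at least `min{δ²/C, 1/C}` times the mass
of `j` has total `H`-mass greater than `min{δ²/C, 1/C}`. -/
theorem stmt9 :
    ∃ C : ℝ, 0 < C ∧
      ∀ (Ω : Type) (_ : MeasurableSpace Ω) (μ : Measure Ω), IsProbabilityMeasure μ →
      ∀ (K : ℕ) (hK : 0 < K) (F : Fin K → Ω → ℤ),
        (∀ i, Measurable (F i)) →
        (∀ i ω, F i ω = 0 ∨ F i ω = 1) →
        iIndepFun F μ →
        (∀ i, IdentDistrib (F i) (F ⟨0, hK⟩) μ μ) →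
        ∀ (δ p : ℝ), 0 < δ →
          μ {ω | F ⟨0, hK⟩ ω = 0} = ENNReal.ofReal p →
          δ / K ≤ p → p ≤ 1 - δ / K →
          μ {ω | ∃ j : ℤ, (∑ i, F i ω) = j ∧
              max (μ {ω' | (∑ i, F i ω') = j + 1}) (μ {ω' | (∑ i, F i ω') = j - 1})
                > ENNReal.ofReal (min (δ ^ 2 / C) (1 / C)) * μ {ω' | (∑ i, F i ω') = j}}
            > ENNReal.ofReal (min (δ ^ 2 / C) (1 / C)) := by
  refine ⟨4, by norm_num, fun Ω _ μ _ K hK F hmeas h01 hind hid δ p hδ hp hδp hpδ => ?_⟩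
  have hη₀ : 0 ≤ min (δ ^ 2 / 4) (1 / 4 : ℝ) := le_min (by positivity) (by norm_num)
  have hη : min (δ ^ 2 / 4) (1 / 4 : ℝ) ≤ 1 / 4 := min_le_right _ _
  have hηδ := min_sq_div_four_one_div_four_lt hδ
  have hδK : δ / K * K = δ := div_mul_cancel₀ δ (by positivity)
  have hp₀ : 0 < p := (by positivity : 0 < δ / K).trans_le hδp
  have hp₁ : p < 1 := hpδ.trans_lt (by simp [hδ, hK])
  have hp' : ∀ i, μ {ω | F i ω = 0} = ENNReal.ofReal p := fun i =>
    ((hid i).measure_mem_eq (measurableSet_singleton 0)).trans hp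
  have hlaw := measure_sum_eq_binomialMass hmeas h01 hind hp₀.le hp₁.le hp'
  rw [Fintype.card_fin] at hlaw
  refine (ENNReal.ofReal_lt_one.2 (by linarith)).trans_le ?_
  rw [← measure_univ (μ := μ)]
  exact measure_mono fun ω _ =>
    ⟨_, sum_eq_card_filter_eq_one (h01 · ω),
      ofReal_mul_measure_lt_max_succ_pred hlaw (by linarith) (by linarith) hη₀ (by linarith)
        (by nlinarith) (by rw [sub_sub_cancel]; nlinarith)
        ((Finset.card_le_univ _).trans_eq (Fintype.card_fin K))⟩
end

section
/- Let K, n be positive integers with 1 ≤ n+1 ≤ K, let 0 < p ≤ 1/2, and consider the binomial probabilities b(n) = C(K,n) p^n (1−p)^{K−n}. Then b(n+1)/b(n) = ((K−n)/(n+1)) · p/(1−p). Moreover, if Kp ≥ 9 and n ∈ [Kp/3, 5Kp/3], then b(n+1)/b(n) ≥ min{1/99, Kp/99}. -/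
/-!
The ratio identity is `C(K,n+1)·(n+1) = C(K,n)·(K-n)` after cancelling `p^n (1-p)^(K-n-1)`.
For the bound, `n ≤ 5Kp/3 ≤ 5K/6` gives `(K-n)p ≥ Kp/6`, while `Kp ≥ 9` absorbs the `+1` in
`n + 1 ≤ 16Kp/9`; together with `1 - p ≤ 1` the ratio is at least `3/32 ≥ 1/99`.
-/

def binomialTerm {R : Type*} [CommRing R] (K : ℕ) (p : R) (m : ℕ) : R :=
  K.choose m * p ^ m * (1 - p) ^ (K - m)

theorem Nat.cast_choose_succ_mul {R : Type*} [CommRing R] {K n : ℕ} (hn : n ≤ K) :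
    (K.choose (n + 1) : R) * (n + 1) = K.choose n * (K - n) := by
  exact_mod_cast congrArg (Nat.cast : ℕ → R) (Nat.choose_succ_right_eq K n)

theorem binomialTerm_succ_div {𝕜 : Type*} [Field 𝕜] [CharZero 𝕜] {K n : ℕ} (hn : n < K)
    {p : 𝕜} (hp : p ≠ 0) (hp1 : 1 - p ≠ 0) :
    binomialTerm K p (n + 1) / binomialTerm K p n = (K - n) / (n + 1) * (p / (1 - p)) := by
  have hchoose : (K.choose n : 𝕜) ≠ 0 := Nat.cast_ne_zero.mpr (Nat.choose_pos hn.le).ne'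
  have hn1 : (n : 𝕜) + 1 ≠ 0 := Nat.cast_add_one_ne_zero n
  have hexp : K - n = K - (n + 1) + 1 := by omega
  rw [binomialTerm, binomialTerm, hexp, pow_succ, pow_succ]
  field_simp
  linear_combination Nat.cast_choose_succ_mul (R := 𝕜) hn.le

theorem three_div_thirtyTwo_le_binomial_ratio {K n p : ℝ} (hn : 0 ≤ n) (hp : 0 < p)
    (hp2 : p ≤ 1 / 2) (hKp : 9 ≤ K * p) (hnKp : n ≤ 5 * (K * p) / 3) :
    3 / 32 ≤ (K - n) / (n + 1) * (p / (1 - p)) := by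
  have hdiff : K * p / 6 ≤ (K - n) * p := by nlinarith
  have hsucc : n + 1 ≤ 16 / 9 * (K * p) := by linarith
  have hp_le : p ≤ p / (1 - p) := le_div_self hp.le (by linarith) (by linarith)
  have hK : K ≠ 0 := by rintro rfl; linarith
  calc 3 / 32 = (K * p / 6) / (16 / 9 * (K * p)) := by field_simp; norm_num
    _ ≤ (K - n) * p / (n + 1) := by gcongr; linarith
    _ = (K - n) / (n + 1) * p := by ring
    _ ≤ (K - n) / (n + 1) * (p / (1 - p)) := by
        gcongr
        exact div_nonneg (by nlinarith) (by linarith)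

/-- Ratio of consecutive binomial probabilities: with
`b n = C(K,n) p^n (1-p)^{K-n}`, one has `b(n+1)/b(n) = ((K-n)/(n+1))·p/(1-p)`;
moreover if `Kp ≥ 9` and `n ∈ [Kp/3, 5Kp/3]` then `b(n+1)/b(n) ≥ min{1/99, Kp/99}`. -/
theorem stmt10 (K n : ℕ) (hn : n + 1 ≤ K) (p : ℝ) (hp : 0 < p) (hp2 : p ≤ 1 / 2)
    (b : ℕ → ℝ) (hb : ∀ m, b m = (K.choose m : ℝ) * p ^ m * (1 - p) ^ (K - m)) :
    b (n + 1) / b n = ((K - n : ℝ) / (n + 1)) * (p / (1 - p)) ∧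
    (9 ≤ K * p → K * p / 3 ≤ (n : ℝ) → (n : ℝ) ≤ 5 * (K * p) / 3 →
      b (n + 1) / b n ≥ min (1 / 99) (K * p / 99)) := by
  have hb : b = binomialTerm K p := funext hb
  have hratio : b (n + 1) / b n = ((K - n : ℝ) / (n + 1)) * (p / (1 - p)) := by
    rw [hb]
    exact binomialTerm_succ_div hn hp.ne' (by linarith)
  refine ⟨hratio, fun hKp _ hnKp => ?_⟩
  rw [hratio, min_eq_left (by linarith), ge_iff_le]
  calc (1 / 99 : ℝ) ≤ 3 / 32 := by norm_num
    _ ≤ _ := three_div_thirtyTwo_le_binomial_ratio n.cast_nonneg hp hp2 hKp hnKp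
end
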